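/- arXiv:2303.16913 — 3 statements merged into one kernel-verified Lean document; each statement's English description precedes it below -/
import Mathlib

section
/- For all real ρ, α, β ≥ 0, positive integer M, and positive integer N ≤ M: (π/4)(√ρ + N√(αβ))² + (1 − π/4)(ρ + αβN) ≤ (π/4)(√ρ + √(αβMN))² + (1 − π/4)(ρ + αβM), with equality if and only if N = M or αβ = 0. That is, the average maximum SNR with N individually controlled active elements (and M − N turned off) never exceeds that of M elements grouped into N subarrays. -/
set_option maxHeartbeats 1000000


open Real

/-- The average maximum SNR with `N` individually controlled active elements (and `M − N`
turned off) never exceeds that of `M` elements grouped into `N` subarrays, with equality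
iff `N = M` or `αβ = 0`. -/
theorem stmt_5 (ρ α β : ℝ) (hρ : 0 ≤ ρ) (hα : 0 ≤ α) (hβ : 0 ≤ β)
    (M N : ℕ) (hN : 1 ≤ N) (hNM : N ≤ M) :
    ((π / 4) * (Real.sqrt ρ + (N : ℝ) * Real.sqrt (α * β)) ^ 2 +
        (1 - π / 4) * (ρ + α * β * N) ≤
      (π / 4) * (Real.sqrt ρ + Real.sqrt (α * β * M * N)) ^ 2 +
        (1 - π / 4) * (ρ + α * β * M)) ∧
    ((π / 4) * (Real.sqrt ρ + (N : ℝ) * Real.sqrt (α * β)) ^ 2 +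
        (1 - π / 4) * (ρ + α * β * N) =
      (π / 4) * (Real.sqrt ρ + Real.sqrt (α * β * M * N)) ^ 2 +
        (1 - π / 4) * (ρ + α * β * M) ↔ N = M ∨ α * β = 0) := by
  have hπ4 : π < 4 := by linarith [Real.pi_lt_d2]
  have hπ0 : 0 < π := Real.pi_pos
  set s := α * β with hs_def
  have hs : 0 ≤ s := mul_nonneg hα hβ
  have hNMr : (N : ℝ) ≤ (M : ℝ) := by exact_mod_cast hNM
  set a := Real.sqrt ρ with ha_def
  set b := Real.sqrt s with hb_def
  set u := Real.sqrt (N : ℝ) with hu_def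
  set v := Real.sqrt (M : ℝ) with hv_def
  have ha : a ^ 2 = ρ := Real.sq_sqrt hρ
  have hb : b ^ 2 = s := Real.sq_sqrt hs
  have hu : u ^ 2 = (N : ℝ) := Real.sq_sqrt (by positivity)
  have hv : v ^ 2 = (M : ℝ) := Real.sq_sqrt (by positivity)
  have ha0 : 0 ≤ a := Real.sqrt_nonneg _
  have hb0 : 0 ≤ b := Real.sqrt_nonneg _
  have hu0 : 0 ≤ u := Real.sqrt_nonneg _
  have hv0 : 0 ≤ v := Real.sqrt_nonneg _
  have huv : u ≤ v := Real.sqrt_le_sqrt hNMr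
  have hsqrt : Real.sqrt (s * M * N) = b * v * u := by
    rw [Real.sqrt_mul (mul_nonneg hs (Nat.cast_nonneg M)), Real.sqrt_mul hs]
  rw [hsqrt, ← ha, ← hb, ← hu, ← hv]
  have t1 : 0 ≤ a * b * u * (v - u) :=
    mul_nonneg (mul_nonneg (mul_nonneg ha0 hb0) hu0) (by linarith)
  have t2 : 0 ≤ b ^ 2 * u ^ 2 * ((v - u) * (v + u)) :=
    mul_nonneg (mul_nonneg (sq_nonneg b) (sq_nonneg u))
      (mul_nonneg (by linarith) (by linarith))
  have t3 : 0 ≤ b ^ 2 * ((v - u) * (v + u)) :=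
    mul_nonneg (sq_nonneg b) (mul_nonneg (by linarith) (by linarith))
  have key : ((π / 4) * (a + b * v * u) ^ 2 + (1 - π / 4) * (a ^ 2 + b ^ 2 * v ^ 2))
      - ((π / 4) * (a + u ^ 2 * b) ^ 2 + (1 - π / 4) * (a ^ 2 + b ^ 2 * u ^ 2))
      = (π / 4) * (2 * (a * b * u * (v - u)) + b ^ 2 * u ^ 2 * ((v - u) * (v + u)))
        + (1 - π / 4) * (b ^ 2 * ((v - u) * (v + u))) := by ring
  have h1 : 0 ≤ (π / 4) * (2 * (a * b * u * (v - u)) + b ^ 2 * u ^ 2 * ((v - u) * (v + u))) :=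
    mul_nonneg (by linarith) (by linarith)
  have h2 : 0 ≤ (1 - π / 4) * (b ^ 2 * ((v - u) * (v + u))) :=
    mul_nonneg (by linarith) t3
  constructor
  · linarith [key, h1, h2]
  constructor
  · intro heq
    by_cases hs0 : s = 0
    · right; rw [hb]; exact hs0
    · left
      have hbpos : 0 < b := Real.sqrt_pos.mpr (lt_of_le_of_ne hs (Ne.symm hs0))
      by_contra hne
      have hltN : N < M := lt_of_le_of_ne hNM hne
      have hltNr : (N : ℝ) < (M : ℝ) := by exact_mod_cast hltN
      have huv' : u < v := Real.sqrt_lt_sqrt (by positivity) hltNr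
      have h2' : 0 < (1 - π / 4) * (b ^ 2 * ((v - u) * (v + u))) := by
        have hu1 : (1 : ℝ) ≤ u ^ 2 := by rw [hu]; exact_mod_cast hN
        have hupos : 0 < u := by nlinarith
        have : 0 < b ^ 2 * ((v - u) * (v + u)) :=
          mul_pos (pow_pos hbpos 2) (mul_pos (by linarith) (by linarith))
        exact mul_pos (by linarith) this
      linarith [key, h1, h2', heq]
  · intro h
    rcases h with h | h
    · have huv2 : u = v := by rw [hu_def, hv_def, h]
      rw [huv2]; ring
    · have hb0' : b = 0 := (pow_eq_zero_iff two_ne_zero).mp h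
      rw [hb0']; ring
end

section
/- If c̃₁ and c̃₂ are conditionally independent given a random variable Θ, with each conditionally uniform on [−π/K, π/K) given Θ, then E[e^{−i c̃₁} e^{i c̃₂}] = sinc²(1/K). -/
/-!
Conditional independence given `Θ` says that the joint law of `(Θ, c₁, c₂)` is the law of `Θ`
composed with the product of the conditional laws of `c₁` and `c₂`. Both conditional laws are a.e.
the same uniform law `U`, so `(c₁, c₂)` has law `U ⊗ U` and the expectation factors as
`(∫ e^{-ix} dU) (∫ e^{ix} dU) = sinc(1/K) ^ 2`.
-/

open MeasureTheory Real ProbabilityTheory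

namespace ProbabilityTheory

theorem CondIndepFun.map_prod_eq_prod_of_condDistrib_ae_eq
    {Ω β β' γ : Type*} [MeasurableSpace Ω] [StandardBorelSpace Ω]
    [MeasurableSpace β] [StandardBorelSpace β] [Nonempty β]
    [MeasurableSpace β'] [StandardBorelSpace β'] [Nonempty β'] [MeasurableSpace γ]
    {μ : Measure Ω} [IsProbabilityMeasure μ] {f : Ω → β} {g : Ω → β'} {k : Ω → γ}
    (hf : Measurable f) (hg : Measurable g) (hk : Measurable k) (h : f ⟂ᵢ[k, hk; μ] g)
    {ν : Measure β} {ν' : Measure β'}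
    (hν : ∀ᵐ θ ∂μ.map k, condDistrib f k μ θ = ν)
    (hν' : ∀ᵐ θ ∂μ.map k, condDistrib g k μ θ = ν') :
    μ.map (fun ω ↦ (f ω, g ω)) = ν.prod ν' := by
  have : IsProbabilityMeasure (μ.map k) := Measure.isProbabilityMeasure_map hk.aemeasurable
  obtain ⟨θ, rfl⟩ := hν.exists
  obtain ⟨θ', rfl⟩ := hν'.exists
  rw [condIndepFun_iff_map_prod_eq_prod_condDistrib_prod_condDistrib hf hg hk] at h
  calc μ.map (fun ω ↦ (f ω, g ω))
      = (μ.map (fun ω ↦ (k ω, f ω, g ω))).map Prod.snd := by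
        rw [Measure.map_map measurable_snd (by fun_prop)]; rfl
    _ = (condDistrib f k μ ×ₖ condDistrib g k μ) ∘ₘ μ.map k := by
        rw [h, Measure.map_comp _ _ measurable_snd, ← Kernel.snd_eq, Kernel.snd_prod]
    _ = (Kernel.const γ (condDistrib f k μ θ) ×ₖ Kernel.const γ (condDistrib g k μ θ'))
          ∘ₘ μ.map k := by
        refine Measure.comp_congr ?_
        filter_upwards [hν, hν'] with a ha ha'
        rw [Kernel.prod_apply, Kernel.prod_apply, Kernel.const_apply, Kernel.const_apply, ha, ha']
    _ = _ := by rw [Kernel.prod_const, Measure.const_comp, measure_univ, one_smul]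

end ProbabilityTheory

theorem integral_exp_mul_I_Ico {b : ℝ} (hb : 0 ≤ b) :
    ∫ x in Set.Ico (-b) b, Complex.exp (x * Complex.I) = 2 * Real.sin b := by
  rw [Measure.restrict_congr_set Ico_ae_eq_Ioc, ← intervalIntegral.integral_of_le (by linarith)]
  simp_rw [mul_comm _ Complex.I]
  rw [integral_exp_mul_complex Complex.I_ne_zero]
  push_cast
  rw [Complex.sin]
  field_simp
  simp [Complex.I_sq]

theorem integral_exp_mul_I_smul_restrict_Ico {b c : ℝ} (hb : 0 ≤ b) (hc : 0 ≤ c) :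
    ∫ x, Complex.exp (x * Complex.I) ∂(ENNReal.ofReal c • volume.restrict (Set.Ico (-b) b)) =
      c * (2 * Real.sin b) := by
  rw [integral_smul_measure, integral_exp_mul_I_Ico hb, ENNReal.toReal_ofReal hc,
    Complex.real_smul]

theorem integral_exp_neg_mul_I_smul_restrict_Ico {b c : ℝ} (hb : 0 ≤ b) (hc : 0 ≤ c) :
    ∫ x, Complex.exp (-x * Complex.I) ∂(ENNReal.ofReal c • volume.restrict (Set.Ico (-b) b)) =
      c * (2 * Real.sin b) := by
  have h_conj (x : ℝ) :
      Complex.exp (-x * Complex.I) = (starRingEnd ℂ) (Complex.exp (x * Complex.I)) := by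
    rw [← Complex.exp_conj, map_mul, Complex.conj_ofReal, Complex.conj_I, mul_neg, neg_mul]
  simp_rw [h_conj, integral_conj, integral_exp_mul_I_smul_restrict_Ico hb hc]
  norm_cast
  exact Complex.conj_ofReal _

theorem stmt_7_general {Ω : Type*} [MeasureSpace Ω] [StandardBorelSpace Ω]
    [IsProbabilityMeasure (volume : Measure Ω)]
    {γ : Type*} [MeasurableSpace γ]
    (K : ℕ) (hK : 1 ≤ K)
    (c₁ c₂ : Ω → ℝ) (Θ : Ω → γ)
    (hc₁ : Measurable c₁) (hc₂ : Measurable c₂) (hΘ : Measurable Θ)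
    (hCondIndep : CondIndepFun (MeasurableSpace.comap Θ inferInstance) (hΘ.comap_le)
      c₁ c₂ (volume : Measure Ω))
    (hUnif₁ : ∀ᵐ θ ∂(Measure.map Θ (volume : Measure Ω)),
      condDistrib c₁ Θ (volume : Measure Ω) θ =
        (ENNReal.ofReal ((K : ℝ) / (2 * π))) •
          (volume.restrict (Set.Ico (-(π / (K : ℝ))) (π / (K : ℝ)))))
    (hUnif₂ : ∀ᵐ θ ∂(Measure.map Θ (volume : Measure Ω)),
      condDistrib c₂ Θ (volume : Measure Ω) θ =
        (ENNReal.ofReal ((K : ℝ) / (2 * π))) •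
          (volume.restrict (Set.Ico (-(π / (K : ℝ))) (π / (K : ℝ))))) :
    (∫ ω, Complex.exp (-(c₁ ω : ℂ) * Complex.I) * Complex.exp ((c₂ ω : ℂ) * Complex.I)
        ∂(volume : Measure Ω)) =
      ((Real.sin (π / K) / (π / K) : ℝ) : ℂ) ^ 2 := by
  have hK₀ : (0 : ℝ) < K := by exact_mod_cast hK
  have hb : 0 ≤ π / K := by positivity
  have hc : 0 ≤ (K : ℝ) / (2 * π) := by positivity
  have h_sinc : (((K : ℝ) / (2 * π) : ℝ) : ℂ) * (2 * Real.sin (π / K)) =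
      ((Real.sin (π / K) / (π / K) : ℝ) : ℂ) := by
    push_cast
    field_simp
  have h_law := hCondIndep.map_prod_eq_prod_of_condDistrib_ae_eq hc₁ hc₂ hΘ hUnif₁ hUnif₂
  calc ∫ ω, Complex.exp (-(c₁ ω : ℂ) * Complex.I) * Complex.exp ((c₂ ω : ℂ) * Complex.I)
      = ∫ p, Complex.exp (-(p.1 : ℂ) * Complex.I) * Complex.exp ((p.2 : ℂ) * Complex.I)
          ∂(volume.map fun ω ↦ (c₁ ω, c₂ ω)) := by
        rw [integral_map (hc₁.prodMk hc₂).aemeasurable (by fun_prop)]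
    _ = ((Real.sin (π / K) / (π / K) : ℝ) : ℂ) ^ 2 := by
        rw [h_law, integral_prod_mul (fun x : ℝ ↦ Complex.exp (-(x : ℂ) * Complex.I))
            (fun y : ℝ ↦ Complex.exp ((y : ℂ) * Complex.I)),
          integral_exp_neg_mul_I_smul_restrict_Ico hb hc, integral_exp_mul_I_smul_restrict_Ico hb hc,
          h_sinc, sq]

/-- If `c̃₁, c̃₂` are conditionally independent given `Θ` and each is conditionally
uniform on `[−π/K, π/K)` given `Θ`, then `E[e^{−i c̃₁} e^{i c̃₂}] = sinc²(1/K)`. -/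
theorem stmt_7 {Ω : Type*} [MeasureSpace Ω] [StandardBorelSpace Ω]
    [IsProbabilityMeasure (volume : Measure Ω)]
    {γ : Type*} [MeasurableSpace γ] [StandardBorelSpace γ] [Nonempty γ]
    (K : ℕ) (hK : 1 ≤ K)
    (c₁ c₂ : Ω → ℝ) (Θ : Ω → γ)
    (hc₁ : Measurable c₁) (hc₂ : Measurable c₂) (hΘ : Measurable Θ)
    (hCondIndep : CondIndepFun (MeasurableSpace.comap Θ inferInstance) (hΘ.comap_le)
      c₁ c₂ (volume : Measure Ω))
    (hUnif₁ : ∀ᵐ θ ∂(Measure.map Θ (volume : Measure Ω)),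
      condDistrib c₁ Θ (volume : Measure Ω) θ =
        (ENNReal.ofReal ((K : ℝ) / (2 * π))) •
          (volume.restrict (Set.Ico (-(π / (K : ℝ))) (π / (K : ℝ)))))
    (hUnif₂ : ∀ᵐ θ ∂(Measure.map Θ (volume : Measure Ω)),
      condDistrib c₂ Θ (volume : Measure Ω) θ =
        (ENNReal.ofReal ((K : ℝ) / (2 * π))) •
          (volume.restrict (Set.Ico (-(π / (K : ℝ))) (π / (K : ℝ))))) :
    (∫ ω, Complex.exp (-(c₁ ω : ℂ) * Complex.I) * Complex.exp ((c₂ ω : ℂ) * Complex.I)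
        ∂(volume : Measure Ω)) =
      ((Real.sin (π / K) / (π / K) : ℝ) : ℂ) ^ 2 :=
  stmt_7_general K hK c₁ c₂ Θ hc₁ hc₂ hΘ hCondIndep hUnif₁ hUnif₂
end

section
/- The function S(P) = ρ + αβM + (π/2)·(ραβM·P·s)/√((ρP + 1/(N+1))·((αβM/N)·P + 1/(N+1))) + (π/4)(1 − 1/N)·((αβM)²·P·s²)/((αβM/N)·P + 1/(N+1)) is monotonically nondecreasing in P ≥ 0, where s = sinc(1/K) ∈ (0, 1]. -/
open Real

/-- The Theorem-1 average SNR factor is monotonically nondecreasing in the normalized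
pilot power `P ≥ 0`. -/
theorem stmt_10 (ρ α β M : ℝ) (hρ : 0 < ρ) (hα : 0 < α) (hβ : 0 < β) (hM : 0 < M)
    (N : ℕ) (hN : 1 ≤ N) (s : ℝ) (hs : 0 < s) (hs1 : s ≤ 1) :
    ∀ P₁ P₂ : ℝ, 0 ≤ P₁ → P₁ ≤ P₂ →
      (ρ + α * β * M +
          (π / 2) * (ρ * (α * β * M) * P₁ * s) /
            Real.sqrt ((ρ * P₁ + 1 / ((N : ℝ) + 1)) *
              ((α * β * M / N) * P₁ + 1 / ((N : ℝ) + 1))) +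
          (π / 4) * (1 - 1 / (N : ℝ)) * ((α * β * M) ^ 2 * P₁ * s ^ 2) /
            ((α * β * M / N) * P₁ + 1 / ((N : ℝ) + 1))) ≤
        (ρ + α * β * M +
          (π / 2) * (ρ * (α * β * M) * P₂ * s) /
            Real.sqrt ((ρ * P₂ + 1 / ((N : ℝ) + 1)) *
              ((α * β * M / N) * P₂ + 1 / ((N : ℝ) + 1))) +
          (π / 4) * (1 - 1 / (N : ℝ)) * ((α * β * M) ^ 2 * P₂ * s ^ 2) /
            ((α * β * M / N) * P₂ + 1 / ((N : ℝ) + 1))) := by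
  intro P₁ P₂ hP1 h12
  have hN' : (1:ℝ) ≤ (N:ℝ) := by exact_mod_cast hN
  have hNpos : (0:ℝ) < (N:ℝ) := by linarith
  have hP2 : (0:ℝ) ≤ P₂ := le_trans hP1 h12
  set K : ℝ := α * β * M with hK
  have hKpos : 0 < K := by positivity
  set c : ℝ := 1 / ((N:ℝ) + 1) with hc
  have hcpos : 0 < c := by positivity
  set d : ℝ := K / (N:ℝ) with hd
  have hdpos : 0 < d := by positivity
  have hd1 : 0 < d * P₁ + c := by nlinarith [mul_nonneg hdpos.le hP1]
  have hd2 : 0 < d * P₂ + c := by nlinarith [mul_nonneg hdpos.le hP2]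
  have hE1 : 0 < (ρ * P₁ + c) * (d * P₁ + c) := by
    apply mul_pos _ hd1
    nlinarith [mul_nonneg hρ.le hP1]
  have hE2 : 0 < (ρ * P₂ + c) * (d * P₂ + c) := by
    apply mul_pos _ hd2
    nlinarith [mul_nonneg hρ.le hP2]
  have h21 : 0 ≤ P₂ - P₁ := sub_nonneg.2 h12
  have key1 : P₁ * Real.sqrt ((ρ * P₂ + c) * (d * P₂ + c)) ≤
      P₂ * Real.sqrt ((ρ * P₁ + c) * (d * P₁ + c)) := by
    have e1 : P₁ * Real.sqrt ((ρ * P₂ + c) * (d * P₂ + c)) =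
        Real.sqrt (P₁ ^ 2 * ((ρ * P₂ + c) * (d * P₂ + c))) := by
      rw [Real.sqrt_mul (sq_nonneg _), Real.sqrt_sq hP1]
    have e2 : P₂ * Real.sqrt ((ρ * P₁ + c) * (d * P₁ + c)) =
        Real.sqrt (P₂ ^ 2 * ((ρ * P₁ + c) * (d * P₁ + c))) := by
      rw [Real.sqrt_mul (sq_nonneg _), Real.sqrt_sq hP2]
    rw [e1, e2]
    apply Real.sqrt_le_sqrt
    nlinarith [mul_nonneg (mul_nonneg hρ.le hcpos.le)
        (mul_nonneg (mul_nonneg hP1 hP2) h21),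
      mul_nonneg (mul_nonneg hdpos.le hcpos.le)
        (mul_nonneg (mul_nonneg hP1 hP2) h21),
      mul_nonneg (mul_nonneg hcpos.le hcpos.le)
        (mul_nonneg (add_nonneg hP1 hP2) h21)]
  have hs1pos : 0 < Real.sqrt ((ρ * P₁ + c) * (d * P₁ + c)) := Real.sqrt_pos.2 hE1
  have hs2pos : 0 < Real.sqrt ((ρ * P₂ + c) * (d * P₂ + c)) := Real.sqrt_pos.2 hE2
  have t2 : (π / 2) * (ρ * K * P₁ * s) / Real.sqrt ((ρ * P₁ + c) * (d * P₁ + c)) ≤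
      (π / 2) * (ρ * K * P₂ * s) / Real.sqrt ((ρ * P₂ + c) * (d * P₂ + c)) := by
    rw [div_le_div_iff₀ hs1pos hs2pos]
    have hcoef : (0:ℝ) ≤ (π / 2) * (ρ * K * s) := by positivity
    calc (π / 2) * (ρ * K * P₁ * s) * Real.sqrt ((ρ * P₂ + c) * (d * P₂ + c))
        = (π / 2) * (ρ * K * s) * (P₁ * Real.sqrt ((ρ * P₂ + c) * (d * P₂ + c))) := by ring
      _ ≤ (π / 2) * (ρ * K * s) * (P₂ * Real.sqrt ((ρ * P₁ + c) * (d * P₁ + c))) :=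
          mul_le_mul_of_nonneg_left key1 hcoef
      _ = (π / 2) * (ρ * K * P₂ * s) * Real.sqrt ((ρ * P₁ + c) * (d * P₁ + c)) := by ring
  have key2 : P₁ * (d * P₂ + c) ≤ P₂ * (d * P₁ + c) := by nlinarith
  have t3 : (π / 4) * (1 - 1 / (N:ℝ)) * (K ^ 2 * P₁ * s ^ 2) / (d * P₁ + c) ≤
      (π / 4) * (1 - 1 / (N:ℝ)) * (K ^ 2 * P₂ * s ^ 2) / (d * P₂ + c) := by
    rw [div_le_div_iff₀ hd1 hd2]
    have hNN : (0:ℝ) ≤ 1 - 1 / (N:ℝ) := by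
      rw [sub_nonneg]
      rw [div_le_one hNpos]
      exact hN'
    have hcoef : (0:ℝ) ≤ (π / 4) * (1 - 1 / (N:ℝ)) * (K ^ 2 * s ^ 2) := by
      have : (0:ℝ) ≤ K ^ 2 * s ^ 2 := by positivity
      have hpi : (0:ℝ) ≤ π / 4 := by positivity
      exact mul_nonneg (mul_nonneg hpi hNN) this
    calc (π / 4) * (1 - 1 / (N:ℝ)) * (K ^ 2 * P₁ * s ^ 2) * (d * P₂ + c)
        = (π / 4) * (1 - 1 / (N:ℝ)) * (K ^ 2 * s ^ 2) * (P₁ * (d * P₂ + c)) := by ring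
      _ ≤ (π / 4) * (1 - 1 / (N:ℝ)) * (K ^ 2 * s ^ 2) * (P₂ * (d * P₁ + c)) :=
          mul_le_mul_of_nonneg_left key2 hcoef
      _ = (π / 4) * (1 - 1 / (N:ℝ)) * (K ^ 2 * P₂ * s ^ 2) * (d * P₁ + c) := by ring
  linarith [t2, t3]
end
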